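/- Let α ∈ (0,1) and define f(λ) = λ(1 − λ)/(1 − αλ) for λ ∈ [0,1). Then λ* := (1 − √(1 − α))/α equals 1/(1 + √(1 − α)), lies in (0,1), and is the maximizer of f over [0,1): for all λ ∈ [0,1), f(λ) ≤ f(λ*). -/

import Mathlib

/-!
Write `s = √(1 - α)`, so that `α = 1 - s² = (1 - s)(1 + s)` and `λ* = 1/(1 + s)`. Clearing the
denominator of `f(λ) ≤ 1/(1 + s)²` leaves the perfect square
`1 - αλ - λ(1 - λ)(1 + s)² = ((1 + s)λ - 1)²`, which vanishes exactly at `λ*`;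
there `f(λ*) = 1/(1 + s)²` because `1 - αλ* = s`.
-/

noncomputable def erasureCapacity (α lam : ℝ) : ℝ := lam * (1 - lam) / (1 - α * lam)

section

variable {α s : ℝ}

lemma one_sub_div_eq_one_div_one_add (hα : α = 1 - s ^ 2) (hα0 : α ≠ 0) (hs : 1 + s ≠ 0) :
    (1 - s) / α = 1 / (1 + s) := by
  rw [div_eq_div_iff hα0 hs, hα]
  ring

lemma erasureCapacity_one_div_one_add (hα : α = 1 - s ^ 2) (hs0 : s ≠ 0) (hs : 1 + s ≠ 0) :
    erasureCapacity α (1 / (1 + s)) = 1 / (1 + s) ^ 2 := by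
  have hden : 1 - α * (1 / (1 + s)) = s := by
    rw [hα]; field_simp; ring
  rw [erasureCapacity, hden]
  field_simp
  ring

lemma erasureCapacity_le_one_div_one_add_sq {lam : ℝ} (hα : α = 1 - s ^ 2) (hs : 0 < 1 + s)
    (hden : 0 < 1 - α * lam) :
    erasureCapacity α lam ≤ 1 / (1 + s) ^ 2 := by
  have gap : 1 - α * lam - lam * (1 - lam) * (1 + s) ^ 2 = ((1 + s) * lam - 1) ^ 2 := by
    rw [hα]; ring
  rw [erasureCapacity, div_le_div_iff₀ hden (by positivity)]
  linarith [sq_nonneg ((1 + s) * lam - 1)]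

end

/-- For `α ∈ (0,1)`, the arrival rate `λ* = (1 − √(1 − α))/α` equals
`1/(1 + √(1 − α))`, lies in `(0,1)`, and maximizes the M/GI/1 erasure
queue-channel capacity `f(λ) = λ(1 − λ)/(1 − αλ)` over `[0,1)`. -/
theorem mg1_capacity_maximizer (α : ℝ) (hα : α ∈ Set.Ioo (0 : ℝ) 1) :
    (1 - Real.sqrt (1 - α)) / α = 1 / (1 + Real.sqrt (1 - α)) ∧
    (1 - Real.sqrt (1 - α)) / α ∈ Set.Ioo (0 : ℝ) 1 ∧
    ∀ lam ∈ Set.Ico (0 : ℝ) 1,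
      lam * (1 - lam) / (1 - α * lam) ≤
        ((1 - Real.sqrt (1 - α)) / α) * (1 - (1 - Real.sqrt (1 - α)) / α) /
          (1 - α * ((1 - Real.sqrt (1 - α)) / α)) := by
  obtain ⟨hα0, hα1⟩ := hα
  set s := Real.sqrt (1 - α)
  have hs0 : 0 < s := Real.sqrt_pos.2 (by linarith)
  have hαs : α = 1 - s ^ 2 := by rw [Real.sq_sqrt (by linarith)]; ring
  rw [one_sub_div_eq_one_div_one_add hαs hα0.ne' (by positivity)]
  refine ⟨rfl, ⟨by positivity, (div_lt_one (by positivity)).2 (by linarith)⟩,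
    fun lam ⟨hlam0, hlam1⟩ => ?_⟩
  have hden : 0 < 1 - α * lam := by nlinarith
  exact (erasureCapacity_le_one_div_one_add_sq hαs (by positivity) hden).trans_eq
    (erasureCapacity_one_div_one_add hαs hs0.ne' (by positivity)).symm
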